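/- arXiv:1904.10041 — 2 statements merged into one kernel-verified Lean document; each statement's English description precedes it below -/
import Mathlib

section
/- Grone's theorem: Let G = (V,E) be a chordal graph with maximal cliques C_1,…,C_p. A partial symmetric matrix X with sparsity pattern E admits a positive semidefinite completion if and only if each principal submatrix X[C_k, C_k] is positive semidefinite for k = 1,…,p. -/
/-- A graph is chordal if every cycle of length at least 4 has a chord. -/
def IsChordal {V : Type*} (G : SimpleGraph V) : Prop :=
  ∀ (v : V) (w : G.Walk v v), w.IsCycle → 4 ≤ w.length →
    ∃ x y, G.Adj x y ∧ x ∈ w.support ∧ y ∈ w.support ∧ s(x, y) ∉ w.edges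

/-- A maximal clique: a clique not properly contained in any other clique. -/
def IsMaxClique {V : Type*} (G : SimpleGraph V) (s : Set V) : Prop :=
  G.IsClique s ∧ ∀ t : Set V, G.IsClique t → s ⊆ t → s = t

/-- `X` has a PSD completion respecting the sparsity pattern given by the graph `G`. -/
def HasPSDCompletion {n : ℕ} (G : SimpleGraph (Fin n)) (X : Matrix (Fin n) (Fin n) ℝ) :
    Prop :=
  ∃ Y : Matrix (Fin n) (Fin n) ℝ, Y.PosSemidef ∧ (∀ i, Y i i = X i i) ∧
    ∀ i j, G.Adj i j → Y i j = X i j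

/-!
Necessity is immediate: a completion agrees with `X` on every clique, so its principal
submatrices there are PSD. For sufficiency, a chordal graph has a simplicial vertex `v` (Dirac):
a minimum separator of two non-adjacent vertices is a clique, because two non-adjacent vertices
of it would be joined by shortest paths through both sides, which close up into a cycle of
length at least 4 without chords; induction on the two sides then yields simplicial vertices.
Completing `G - v` by induction to `A`, the set `{v} ∪ N(v)` is a clique, so
`[[X v v, X[v, N]], [X[N, v], A[N, N]]]` is PSD. Hence `X[N, v] = A[N, N] z` for some `z`
with `zᵀ X[N, v] ≤ X v v`, and bordering `A` by `A z` (with `z` extended by zero) and corner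
`X v v` is a PSD completion of `X`.
-/

namespace Matrix

variable {ι κ : Type*}

/-- The bordered matrix `[[d, bᵀ], [b, A]]`, with `none` indexing the new first row. -/
def border (d : ℝ) (b : ι → ℝ) (A : Matrix ι ι ℝ) : Matrix (Option ι) (Option ι) ℝ :=
  of fun o o' => o.elim (o'.elim d b) fun i => o'.elim (b i) (A i)

variable {d : ℝ} {b : ι → ℝ} {A : Matrix ι ι ℝ}

@[simp] lemma border_none_none : border d b A none none = d := rfl
@[simp] lemma border_none_some (j : ι) : border d b A none (some j) = b j := rfl
@[simp] lemma border_some_none (i : ι) : border d b A (some i) none = b i := rfl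
@[simp] lemma border_some_some (i j : ι) : border d b A (some i) (some j) = A i j := rfl

@[simp] lemma border_submatrix_some : (border d b A).submatrix some some = A := rfl

lemma isHermitian_border (hA : A.IsHermitian) : (border d b A).IsHermitian := by
  ext (_ | i) (_ | j) <;> simp
  simpa using hA.apply i j

variable [Fintype ι]

lemma IsHermitian.exists_mulVec_eq (hA : A.IsHermitian) (hb : ∀ x, A *ᵥ x = 0 → b ⬝ᵥ x = 0) :
    ∃ z, A *ᵥ z = b := by
  classical
  set T := toEuclideanLin A
  have hmem : WithLp.toLp 2 b ∈ (LinearMap.ker T)ᗮ := by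
    rw [Submodule.mem_orthogonal]
    intro y hy
    rw [EuclideanSpace.inner_eq_star_dotProduct, star_trivial]
    exact hb _ (congrArg WithLp.ofLp hy)
  rw [← (isSymmetric_toEuclideanLin_iff.2 hA).orthogonal_range,
    Submodule.orthogonal_orthogonal] at hmem
  obtain ⟨z, hz⟩ := hmem
  exact ⟨WithLp.ofLp z, congrArg WithLp.ofLp hz⟩

lemma border_mulVec_none (x : Option ι → ℝ) :
    (border d b A *ᵥ x) none = d * x none + b ⬝ᵥ fun i => x (some i) := by
  simp [mulVec, dotProduct, Fintype.sum_option]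

lemma border_mulVec_some (x : Option ι → ℝ) (i : ι) :
    (border d b A *ᵥ x) (some i) = b i * x none + (A *ᵥ fun j => x (some j)) i := by
  simp [mulVec, dotProduct, Fintype.sum_option]

lemma dotProduct_border_mulVec (x : Option ι → ℝ) :
    x ⬝ᵥ (border d b A *ᵥ x) = d * x none ^ 2 + 2 * x none * (b ⬝ᵥ fun i => x (some i)) +
      (fun i => x (some i)) ⬝ᵥ (A *ᵥ fun i => x (some i)) := by
  rw [dotProduct, Fintype.sum_option, border_mulVec_none]
  have hb : ∑ i, x (some i) * (b i * x none) = x none * (b ⬝ᵥ fun i => x (some i)) := by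
    rw [dotProduct, Finset.mul_sum]
    exact Finset.sum_congr rfl fun i _ => by ring
  simp only [border_mulVec_some, mul_add, Finset.sum_add_distrib, hb, dotProduct]
  ring

lemma posSemidef_border_mulVec {z : ι → ℝ} (hA : A.PosSemidef) (hz : z ⬝ᵥ (A *ᵥ z) ≤ d) :
    (border d (A *ᵥ z) A).PosSemidef := by
  refine .of_dotProduct_mulVec_nonneg (isHermitian_border hA.1) fun x => ?_
  set t := x none
  set w : ι → ℝ := fun i => x (some i)
  have hsymm : z ⬝ᵥ (A *ᵥ w) = (A *ᵥ z) ⬝ᵥ w := by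
    rw [dotProduct_mulVec, ← mulVec_transpose, ← conjTranspose_eq_transpose_of_trivial, hA.1]
  -- completing the square: `xᵀ M x = (d - zᵀAz) t² + (w + t z)ᵀ A (w + t z)`
  have hsq := hA.dotProduct_mulVec_nonneg (w + t • z)
  rw [star_trivial, mulVec_add, mulVec_smul, dotProduct_add, add_dotProduct, add_dotProduct,
    dotProduct_smul, smul_dotProduct, smul_dotProduct, dotProduct_smul, hsymm,
    dotProduct_comm w (A *ᵥ z), smul_eq_mul, smul_eq_mul, smul_eq_mul] at hsq
  rw [star_trivial, dotProduct_border_mulVec]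
  nlinarith [mul_nonneg (sub_nonneg.2 hz) (sq_nonneg t)]

lemma PosSemidef.exists_mulVec_eq_of_border (h : (border d b A).PosSemidef) :
    ∃ z, A *ᵥ z = b ∧ z ⬝ᵥ b ≤ d := by
  have hA : A.PosSemidef := by simpa using h.submatrix some
  have hker : ∀ x, A *ᵥ x = 0 → b ⬝ᵥ x = 0 := by
    intro x hx
    have hquad : star (fun o => o.elim 0 x) ⬝ᵥ (border d b A *ᵥ fun o => o.elim 0 x) = 0 := by
      simp [dotProduct_border_mulVec, hx]
    simpa [border_mulVec_none] using
      congrFun ((h.dotProduct_mulVec_zero_iff _).1 hquad) none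
  obtain ⟨z, hz⟩ := hA.1.exists_mulVec_eq hker
  refine ⟨z, hz, ?_⟩
  have h1 := h.dotProduct_mulVec_nonneg fun o => o.elim 1 (-z)
  simp only [star_trivial, dotProduct_border_mulVec, Option.elim, mulVec_neg, hz,
    dotProduct_neg, neg_dotProduct, dotProduct_comm b z] at h1
  linarith

variable [Fintype κ]

lemma dotProduct_extend_zero {e : κ → ι} (he : Function.Injective e) (z : κ → ℝ) (f : ι → ℝ) :
    Function.extend e z 0 ⬝ᵥ f = z ⬝ᵥ (f ∘ e) := by
  classical
  refine (Fintype.sum_of_injective e he _ _ (fun i hi => ?_) fun k => ?_).symm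
  · simp [Function.extend_apply' _ _ _ fun ⟨k, hk⟩ => hi ⟨k, hk⟩]
  · simp [he.extend_apply]

lemma PosSemidef.exists_border_of_submatrix (hA : A.PosSemidef) {e : κ → ι}
    (he : Function.Injective e) {c : κ → ℝ} (h : (border d c (A.submatrix e e)).PosSemidef) :
    ∃ b : ι → ℝ, (border d b A).PosSemidef ∧ ∀ k, b (e k) = c k := by
  obtain ⟨z, hz, hzd⟩ := h.exists_mulVec_eq_of_border
  have hext : ∀ k, (A *ᵥ Function.extend e z 0) (e k) = c k := fun k => by
    rw [mulVec, dotProduct_comm, dotProduct_extend_zero he, ← hz, mulVec, dotProduct_comm]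
    rfl
  refine ⟨A *ᵥ Function.extend e z 0, posSemidef_border_mulVec hA ?_, hext⟩
  rwa [dotProduct_extend_zero he, show (A *ᵥ Function.extend e z 0) ∘ e = c from funext hext]

end Matrix

namespace SimpleGraph

variable {V : Type*} {G : SimpleGraph V}

def restrict (G : SimpleGraph V) (A : Set V) : SimpleGraph V where
  Adj u w := G.Adj u w ∧ u ∈ A ∧ w ∈ A
  symm := ⟨fun _ _ h => ⟨h.1.symm, h.2.2, h.2.1⟩⟩
  loopless := ⟨fun u h => G.loopless.irrefl u h.1⟩

@[simp] lemma restrict_adj {A : Set V} {u w : V} :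
    (G.restrict A).Adj u w ↔ G.Adj u w ∧ u ∈ A ∧ w ∈ A := .rfl

lemma restrict_le (A : Set V) : G.restrict A ≤ G := fun _ _ h => h.1

lemma Walk.mem_of_mem_support_restrict {A : Set V} {u w : V} (p : (G.restrict A).Walk u w)
    (hu : u ∈ A) : ∀ z ∈ p.support, z ∈ A := by
  induction p with
  | nil => simpa using hu
  | cons h _ ih => simpa [hu] using ih h.2.2

lemma Reachable.mem_of_restrict {A : Set V} {u w : V} (h : (G.restrict A).Reachable u w)
    (hu : u ∈ A) : w ∈ A :=
  h.elim fun p => p.mem_of_mem_support_restrict hu w p.end_mem_support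

lemma Walk.reachable_restrict {A : Set V} {u w : V} (p : G.Walk u w)
    (hp : ∀ z ∈ p.support, z ∈ A) : (G.restrict A).Reachable u w := by
  induction p with
  | nil => rfl
  | cons h q ih =>
    simp only [Walk.support_cons, List.mem_cons, forall_eq_or_imp] at hp
    exact (restrict_adj.2 ⟨h, hp.1, hp.2 _ q.start_mem_support⟩).reachable.trans (ih hp.2)

lemma Walk.IsPath.start_notMem_support_tail {u v : V} {p : G.Walk u v} (hp : p.IsPath) :
    u ∉ p.support.tail := by
  have := hp.support_nodup
  rw [← Walk.cons_tail_support, List.nodup_cons] at this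
  exact this.1

lemma Walk.isChordless_of_forall_length_le {u v : V} (p : G.Walk u v)
    (hmin : ∀ q : G.Walk u v, p.length ≤ q.length) : p.IsChordless := by
  classical
  induction p with
  | nil => simp [isChordless_iff_forall_mem_edges]
  | @cons u w v h q ih =>
    have ihq := ih fun r => by simpa using hmin (cons h r)
    have hstart : ∀ b ∈ q.support, G.Adj u b → s(u, b) ∈ (cons h q).edges := by
      intro b hb hub
      by_cases hbw : b = w
      · simp [hbw]
      -- otherwise jumping from `u` straight to `b` would shorten `cons h q`
      have := hmin (cons hub (q.dropUntil b hb))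
      have := q.length_dropUntil_lt_length hb hbw
      simp only [length_cons] at *
      omega
    rw [isChordless_iff_forall_mem_edges]
    simp only [support_cons, List.mem_cons]
    rintro a b (rfl | ha) (rfl | hb) hab
    · exact absurd hab (G.loopless.irrefl _)
    · exact hstart b hb hab
    · rw [Sym2.eq_swap]; exact hstart a ha hab.symm
    · exact List.mem_cons_of_mem _ (ihq.mem_edges ha hb hab)

lemma Reachable.exists_isPath_isChordless_restrict {A : Set V} {x y : V}
    (h : (G.restrict A).Reachable x y) (hx : x ∈ A) :
    ∃ p : G.Walk x y, p.IsPath ∧ p.IsChordless ∧ ∀ z ∈ p.support, z ∈ A := by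
  obtain ⟨q, hq, hqlen⟩ := h.exists_path_of_dist
  have hqc := q.isChordless_of_forall_length_le fun r => hqlen ▸ dist_le r
  have hqA := q.mem_of_mem_support_restrict hx
  refine ⟨q.mapLe (restrict_le A), hq.mapLe _, ?_, by simpa using hqA⟩
  rw [Walk.isChordless_iff_forall_mem_edges]
  simp only [Walk.support_mapLe_eq_support, Walk.edges_mapLe_eq_edges]
  exact fun a b ha hb hab => hqc.mem_edges ha hb ⟨hab, hqA a ha, hqA b hb⟩

def Separates (G : SimpleGraph V) (S : Set V) (a b : V) : Prop :=
  a ∉ S ∧ b ∉ S ∧ ¬(G.restrict Sᶜ).Reachable a b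

namespace Separates

variable {S : Set V} {a b : V}

lemma symm (h : G.Separates S a b) : G.Separates S b a :=
  ⟨h.2.1, h.1, fun hr => h.2.2 hr.symm⟩

lemma not_adj (h : G.Separates S a b) {u w : V} (hu : (G.restrict Sᶜ).Reachable a u)
    (hw : (G.restrict Sᶜ).Reachable b w) : ¬G.Adj u w := fun huw =>
  h.2.2 <| hu.trans <| (restrict_adj.2 ⟨huw, hu.mem_of_restrict h.1, hw.mem_of_restrict h.2.1⟩
    ).reachable.trans hw.symm

lemma exists_adj_of_minimal {S : Finset V} (hS : G.Separates S a b)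
    (hmin : ∀ T : Finset V, G.Separates T a b → S.card ≤ T.card) {s : V} (hs : s ∈ S) :
    ∃ n, (G.restrict (↑S)ᶜ).Reachable a n ∧ G.Adj n s := by
  classical
  have hreach : (G.restrict (↑(S.erase s))ᶜ).Reachable a b := by
    by_contra h
    have := hmin _ ⟨fun ha => hS.1 (Finset.mem_of_mem_erase ha),
      fun hb => hS.2.1 (Finset.mem_of_mem_erase hb), h⟩
    have := Finset.card_erase_lt_of_mem hs
    omega
  obtain ⟨p⟩ := hreach
  obtain ⟨⟨⟨n, m⟩, hnm⟩, -, hn, hm⟩ :=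
    p.exists_boundary_dart {u | (G.restrict (↑S)ᶜ).Reachable a u} .rfl hS.2.2
  obtain ⟨hadj, -, hmS⟩ := restrict_adj.1 hnm
  refine ⟨n, hn, ?_⟩
  by_cases hm' : m ∈ S
  · obtain rfl : m = s := by
      by_contra hne
      exact hmS (Finset.mem_erase.2 ⟨hne, hm'⟩)
    exact hadj
  · exact absurd (hn.trans (restrict_adj.2 ⟨hadj, hn.mem_of_restrict hS.1, hm'⟩).reachable) hm

end Separates

lemma separates_compl_pair {a b : V} (hab : a ≠ b) (hnadj : ¬G.Adj a b) :
    G.Separates {a, b}ᶜ a b := by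
  refine ⟨by simp, by simp, fun ⟨p⟩ => ?_⟩
  obtain ⟨d, -, hd1, hd2⟩ := p.exists_boundary_dart {a} rfl hab.symm
  obtain ⟨hadj, -, hd⟩ := restrict_adj.1 d.adj
  rcases (by simpa using hd : d.snd = a ∨ d.snd = b) with h | h
  · exact hd2 h
  · exact hnadj (by simp_all)

lemma exists_minimal_separates [Finite V] {a b : V} (hab : a ≠ b) (hnadj : ¬G.Adj a b) :
    ∃ S : Finset V, G.Separates S a b ∧ ∀ T : Finset V, G.Separates T a b → S.card ≤ T.card := by
  classical
  have := Fintype.ofFinite V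
  obtain ⟨S, hS, hmin⟩ := Finset.exists_min_image
    {S : Finset V | G.Separates S a b} Finset.card
    ⟨{a, b}ᶜ, by simpa only [Finset.mem_filter_univ, Finset.coe_compl, Finset.coe_pair] using
      separates_compl_pair hab hnadj⟩
  exact ⟨S, by simpa using hS, fun T hT => hmin T (by simpa using hT)⟩

lemma exists_isPath_isChordless_via_component {S : Set V} {r x y : V}
    (hx : ∃ n, (G.restrict Sᶜ).Reachable r n ∧ G.Adj n x)
    (hy : ∃ n, (G.restrict Sᶜ).Reachable r n ∧ G.Adj n y) :
    ∃ p : G.Walk x y, p.IsPath ∧ p.IsChordless ∧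
      ∀ z ∈ p.support, z ≠ x → z ≠ y → (G.restrict Sᶜ).Reachable r z := by
  classical
  obtain ⟨nx, hnx, hxadj⟩ := hx
  obtain ⟨ny, hny, hyadj⟩ := hy
  set A := {z | (G.restrict Sᶜ).Reachable r z} ∪ {x, y}
  have hmid : (G.restrict A).Reachable nx ny := by
    obtain ⟨q⟩ := hnx.symm.trans hny
    refine (q.mapLe (restrict_le _)).reachable_restrict fun z hz => Or.inl ?_
    rw [Walk.support_mapLe_eq_support] at hz
    exact hnx.trans ⟨q.takeUntil z hz⟩
  have hreach : (G.restrict A).Reachable x y :=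
    (restrict_adj.2 ⟨hxadj.symm, by simp [A], Or.inl hnx⟩).reachable.trans
      (hmid.trans (restrict_adj.2 ⟨hyadj, Or.inl hny, by simp [A]⟩).reachable)
  obtain ⟨p, hp, hpc, hpA⟩ := hreach.exists_isPath_isChordless_restrict (by simp [A])
  exact ⟨p, hp, hpc, fun z hz hzx hzy => by simpa [A, hzx, hzy] using hpA z hz⟩

def IsSimplicial (G : SimpleGraph V) (v : V) : Prop := G.IsClique (G.neighborSet v)

lemma IsSimplicial.of_induce {U : Set V} {v : U} (hv : (G.induce U).IsSimplicial v)
    (hN : G.neighborSet v ⊆ U) : G.IsSimplicial v := fun x hx y hy hxy =>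
  @hv ⟨x, hN hx⟩ hx ⟨y, hN hy⟩ hy (by simpa using hxy)

lemma neighborSet_subset_of_reachable_restrict_compl {S : Set V} {r u : V} (hr : r ∉ S)
    (hu : (G.restrict Sᶜ).Reachable r u) :
    G.neighborSet u ⊆ {z | (G.restrict Sᶜ).Reachable r z} ∪ S := fun z hz => by
  by_cases hzS : z ∈ S
  · exact Or.inr hzS
  · exact Or.inl (hu.trans (restrict_adj.2 ⟨hz, hu.mem_of_restrict hr, hzS⟩).reachable)

end SimpleGraph

open SimpleGraph

section Chordal

variable {V : Type*} {G : SimpleGraph V}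

lemma IsChordal.induce (hG : IsChordal G) (s : Set V) : IsChordal (G.induce s) := by
  intro v w hw hlen
  let f := (Embedding.induce (G := G) s).toHom
  obtain ⟨x, y, hxy, hx, hy, hchord⟩ := hG _ (w.map f)
    ((Walk.isCycle_map_iff_of_injective Subtype.val_injective).2 hw) (by simpa using hlen)
  rw [Walk.support_map, List.mem_map] at hx hy
  obtain ⟨x, hx, rfl⟩ := hx
  obtain ⟨y, hy, rfl⟩ := hy
  refine ⟨x, y, hxy, hx, hy, fun h => hchord ?_⟩
  rw [Walk.edges_map]
  exact List.mem_map_of_mem h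

lemma IsChordal.isClique_of_minimal_separates (hG : IsChordal G) {S : Finset V} {a b : V}
    (hS : G.Separates S a b)
    (hmin : ∀ T : Finset V, G.Separates T a b → S.card ≤ T.card) : G.IsClique (S : Set V) := by
  intro x hx y hy hxy
  by_contra hnadj
  have hmin' : ∀ T : Finset V, G.Separates T b a → S.card ≤ T.card := fun T hT => hmin T hT.symm
  obtain ⟨pa, hpa, hpac, hpaC⟩ := exists_isPath_isChordless_via_component
    (hS.exists_adj_of_minimal hmin hx) (hS.exists_adj_of_minimal hmin hy)
  obtain ⟨pb, hpb, hpbc, hpbC⟩ := exists_isPath_isChordless_via_component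
    (hS.symm.exists_adj_of_minimal hmin' hx) (hS.symm.exists_adj_of_minimal hmin' hy)
  have hmeet : ∀ z ∈ pa.support, z ∈ pb.support → z = x ∨ z = y := by
    intro z hza hzb
    by_contra! h
    exact hS.2.2 ((hpaC z hza h.1 h.2).trans (hpbC z hzb h.1 h.2).symm)
  have hlen : ∀ p : G.Walk x y, 2 ≤ p.length := fun p => by
    by_contra! h
    interval_cases hl : p.length
    · exact hxy (Walk.eq_of_length_eq_zero hl)
    · exact hnadj (Walk.adj_of_length_eq_one hl)
  have hcyc : (pa.append pb.reverse).IsCycle := by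
    refine hpa.isCycle_append hpb.reverse (fun z hza hzb => ?_) (Or.inl (hlen pa))
    have hzb' := List.mem_of_mem_tail hzb
    rw [Walk.support_reverse, List.mem_reverse] at hzb'
    rcases hmeet z (List.mem_of_mem_tail hza) hzb' with rfl | rfl
    · exact hpa.start_notMem_support_tail hza
    · exact hpb.reverse.start_notMem_support_tail hzb
  obtain ⟨u, w, huw, hu, hw, hchord⟩ :=
    hG x _ hcyc (by
      have := hlen pa; have := hlen pb
      simp only [Walk.length_append, Walk.length_reverse]; omega)
  rw [Walk.mem_support_append_iff, Walk.support_reverse, List.mem_reverse] at hu hw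
  rw [Walk.edges_append, Walk.edges_reverse, List.mem_append, List.mem_reverse, not_or] at hchord
  have hcross : ∀ u w, G.Adj u w → u ∈ pa.support → u ∉ pb.support →
      w ∈ pb.support → w ∉ pa.support → False := by
    intro u w huw hua hub hwb hwa
    refine hS.not_adj (hpaC u hua ?_ ?_) (hpbC w hwb ?_ ?_) huw <;> rintro rfl
    exacts [hub pb.start_mem_support, hub pb.end_mem_support, hwa pa.start_mem_support,
      hwa pa.end_mem_support]
  -- a chord within one path contradicts its chordlessness, one across the sides separation
  by_cases ha : u ∈ pa.support ∧ w ∈ pa.support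
  · exact hchord.1 (hpac.mem_edges ha.1 ha.2 huw)
  by_cases hb : u ∈ pb.support ∧ w ∈ pb.support
  · exact hchord.2 (hpbc.mem_edges hb.1 hb.2 huw)
  rcases hu with hu | hu <;> rcases hw with hw | hw
  · exact ha ⟨hu, hw⟩
  · exact hcross u w huw hu (fun h => hb ⟨h, hw⟩) hw (fun h => ha ⟨hu, h⟩)
  · exact hcross w u huw.symm hw (fun h => hb ⟨hu, h⟩) hu (fun h => ha ⟨h, hw⟩)
  · exact hb ⟨hu, hw⟩

lemma IsChordal.exists_isSimplicial_notMem [Finite V] (hG : IsChordal G) {K : Set V}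
    (hK : G.IsClique K) (hKV : ∃ v, v ∉ K) :
    ∃ s ∉ K, G.IsSimplicial s := by
  induction h : Nat.card V using Nat.strong_induction_on generalizing V with
  | _ n ih =>
  by_cases hcomplete : ∀ a b : V, a ≠ b → G.Adj a b
  · obtain ⟨v, hv⟩ := hKV
    exact ⟨v, hv, fun x _ y _ hxy => hcomplete x y hxy⟩
  push Not at hcomplete
  obtain ⟨a, b, hab, hnadj⟩ := hcomplete
  obtain ⟨S, hS, hmin⟩ := exists_minimal_separates hab hnadj
  have hSK : G.IsClique (S : Set V) := hG.isClique_of_minimal_separates hS hmin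
  -- induction applies to `U` = (component of `r` in `G - S`) ∪ `S`, which misses `r'`; a
  -- simplicial vertex of `G[U]` off the clique `S` lies in that component, so all its
  -- neighbours are in `U`
  have side : ∀ r r', G.Separates S r r' →
      ∃ s, (G.restrict (↑S)ᶜ).Reachable r s ∧ G.IsSimplicial s := by
    intro r r' hrr'
    set U := {z | (G.restrict (↑S)ᶜ).Reachable r z} ∪ S
    have hcard : Nat.card U < n := h ▸ Finite.card_subtype_lt (x := r') fun h' =>
      h'.elim hrr'.2.2 hrr'.2.1
    obtain ⟨⟨s, hsU⟩, hsS, hs⟩ := ih _ hcard (hG.induce U)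
      (K := {z | (z : V) ∈ S}) (fun x hx y hy hxy => hSK hx hy (Subtype.coe_ne_coe.2 hxy))
      ⟨⟨r, Or.inl .rfl⟩, hrr'.1⟩ rfl
    have hsr := hsU.resolve_right hsS
    exact ⟨s, hsr, hs.of_induce (neighborSet_subset_of_reachable_restrict_compl hrr'.1 hsr)⟩
  obtain ⟨sa, hsa, hsa'⟩ := side a b hS
  obtain ⟨sb, hsb, hsb'⟩ := side b a hS.symm
  by_cases hsaK : sa ∈ K
  · refine ⟨sb, fun hsbK => ?_, hsb'⟩
    refine hS.not_adj hsa hsb (hK hsaK hsbK fun hsab => ?_)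
    exact hS.2.2 (hsa.trans (hsab ▸ hsb).symm)
  · exact ⟨sa, hsaK, hsa'⟩

end Chordal

section Completion

open Matrix SimpleGraph

variable {V : Type*} {G : SimpleGraph V} {X Y : Matrix V V ℝ}

def IsPSDCompletion (G : SimpleGraph V) (X Y : Matrix V V ℝ) : Prop :=
  Y.PosSemidef ∧ (∀ i, Y i i = X i i) ∧ ∀ i j, G.Adj i j → Y i j = X i j

lemma IsPSDCompletion.submatrix_eq (hY : IsPSDCompletion G X Y) {κ : Type*} (f : κ → V)
    (hf : G.IsClique (Set.range f)) : Y.submatrix f f = X.submatrix f f := by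
  ext i j
  by_cases hij : f i = f j
  · simp only [submatrix_apply, hij, hY.2.1]
  · exact hY.2.2 _ _ (hf (Set.mem_range_self i) (Set.mem_range_self j) hij)

def CliquewisePosSemidef (G : SimpleGraph V) (X : Matrix V V ℝ) : Prop :=
  ∀ C : Finset V, G.IsClique (C : Set V) →
    (X.submatrix ((↑) : C → V) (↑)).PosSemidef

namespace CliquewisePosSemidef

lemma submatrix (h : CliquewisePosSemidef G X) {κ : Type*} [Fintype κ] (f : κ → V)
    (hf : G.IsClique (Set.range f)) : (X.submatrix f f).PosSemidef := by
  classical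
  have hC := h (Finset.univ.image f) (by simpa using hf)
  exact hC.submatrix fun k => ⟨f k, by simp⟩

lemma induce (h : CliquewisePosSemidef G X) (s : Set V) :
    CliquewisePosSemidef (G.induce s) (X.submatrix (↑) (↑)) := by
  intro C hC
  refine h.submatrix (fun c : C => (c : V)) ?_
  rintro _ ⟨c, rfl⟩ _ ⟨c', rfl⟩ hcc'
  exact hC c.2 c'.2 fun h => hcc' (congrArg Subtype.val h)

end CliquewisePosSemidef

lemma cliquewisePosSemidef_of_isMaxClique [Finite V]
    (h : ∀ C : Finset V, IsMaxClique G (C : Set V) → (X.submatrix ((↑) : C → V) (↑)).PosSemidef) :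
    CliquewisePosSemidef G X := by
  classical
  have := Fintype.ofFinite V
  intro C hC
  obtain ⟨D, hCD, hD⟩ := Finite.exists_le_maximal (p := G.IsClique) hC
  have hmax : IsMaxClique G (D.toFinset : Set V) := by
    rw [Set.coe_toFinset]
    exact ⟨hD.prop, fun t ht hDt => le_antisymm hDt (hD.2 ht hDt)⟩
  exact (h _ hmax).submatrix fun c : C => ⟨c, by simpa using hCD c.2⟩

lemma SimpleGraph.IsSimplicial.exists_isPSDCompletion [Fintype V] {v : V}
    (hv : G.IsSimplicial v) (hX : X.IsSymm) (hcl : CliquewisePosSemidef G X)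
    {A : Matrix {u // u ≠ v} {u // u ≠ v} ℝ}
    (hA : IsPSDCompletion (G.induce {u | u ≠ v}) (X.submatrix (↑) (↑)) A) :
    ∃ Y, IsPSDCompletion G X Y := by
  classical
  let N := {u : {u // u ≠ v} // G.Adj v u}
  let K : Option N → V := fun o => o.elim v fun i => i.1.1
  have hK : G.IsClique (Set.range K) := by
    rintro _ ⟨_ | i, rfl⟩ _ ⟨_ | j, rfl⟩ hij
    · exact absurd rfl hij
    · exact j.2
    · exact i.2.symm
    · exact hv i.2 j.2 hij
  have hAN : A.submatrix (Subtype.val : N → _) Subtype.val = X.submatrix (K ∘ some) (K ∘ some) :=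
    hA.submatrix_eq _ fun _ ⟨i, hi⟩ _ ⟨j, hj⟩ hij =>
      hv (hi ▸ i.2) (hj ▸ j.2) fun h => hij (Subtype.ext h)
  have hW : (border (X v v) (fun i : N => X i.1.1 v)
      (A.submatrix Subtype.val Subtype.val)).PosSemidef := by
    convert hcl.submatrix K hK using 1
    ext (_ | i) (_ | j)
    · rfl
    · exact (hX.apply _ _)
    · rfl
    · exact congrFun (congrFun hAN i) j
  obtain ⟨c, hc, hcN⟩ := hA.1.exists_border_of_submatrix (κ := N) Subtype.val_injective hW
  let e := (Equiv.optionSubtypeNe v).symm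
  refine ⟨(border (X v v) c A).submatrix e e, hc.submatrix e, ?_, ?_⟩
  · rw [e.symm.surjective.forall]
    rintro (_ | i)
    · simp [e]
    · simpa [e, i.2] using hA.2.1 i
  · rw [e.symm.surjective.forall₂]
    rintro (_ | i) (_ | j) hij
    · exact absurd hij (G.loopless.irrefl _)
    · simpa [e, j.2, hX.apply] using hcN ⟨j, hij⟩
    · simpa [e, i.2] using hcN ⟨i, hij.symm⟩
    · simpa [e, i.2, j.2] using hA.2.2 i j hij

theorem IsChordal.exists_isPSDCompletion [Finite V] (hG : IsChordal G) (hX : X.IsSymm)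
    (hcl : CliquewisePosSemidef G X) : ∃ Y, IsPSDCompletion G X Y := by
  classical
  induction h : Nat.card V using Nat.strong_induction_on generalizing V with
  | _ n ih =>
  cases isEmpty_or_nonempty V
  · exact ⟨0, .zero, isEmptyElim, isEmptyElim⟩
  have := Fintype.ofFinite V
  obtain ⟨v, -, hv⟩ := hG.exists_isSimplicial_notMem (K := ∅) (by simp) (by simp)
  obtain ⟨A, hA⟩ := ih _ (h ▸ Finite.card_subtype_lt (x := v) (by simp))
    (hG.induce {u | u ≠ v}) (hX.submatrix _) (hcl.induce _) rfl
  exact hv.exists_isPSDCompletion hX hcl hA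

end Completion

/-- Grone's theorem: for a chordal graph `G`, a partial symmetric matrix `X` with
sparsity pattern `G` admits a PSD completion iff every principal submatrix indexed by a
maximal clique of `G` is PSD. -/
theorem grone {n : ℕ} (G : SimpleGraph (Fin n)) (hG : IsChordal G)
    (X : Matrix (Fin n) (Fin n) ℝ) (hsymm : X.IsSymm) :
    HasPSDCompletion G X ↔
      ∀ C : Finset (Fin n), IsMaxClique G (C : Set (Fin n)) →
        (X.submatrix (fun c : {x // x ∈ C} => (c : Fin n))
          (fun c : {x // x ∈ C} => (c : Fin n))).PosSemidef := by
  constructor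
  · rintro ⟨Y, hY⟩ C hC
    rw [← IsPSDCompletion.submatrix_eq hY _ (by simpa using hC.1)]
    exact hY.1.submatrix _
  · intro h
    exact hG.exists_isPSDCompletion hsymm (cliquewisePosSemidef_of_isMaxClique h)
end

section
/- If X = uuᵀ for u = (1, r, s) encoding the subspace clustering variables, then the entries of X corresponding to products s_{i₁j₁}s_{i₂j₂} with i₁ ≠ i₂ and j₁ ≠ j₂ are not needed to express any of the constraints (4a)–(4d); formally, each constraint of problem (4), when lifted to linear constraints ⟨A, X⟩ = b on X, uses A supported only on entries (p,q) where p and q index the same point j or involve the leading 1 or the same subspace's normal coordinates. -/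
/-!
Every constraint of (4) is an affine relation between the monomials `s i j`, `s i j * r i k`,
`s i j ^ 2` and `r i k ^ 2`, i.e. between the entries `(1, s i j)`, `(s i j, r i k)`,
`(s i j, s i j)` and `(r i k, r i k)` of `X = u uᵀ`, all of which are allowed. The only
nonlinear point is the absolute value in (4a): since the binary constraint forces `s i j ≥ 0`,
`s i j * |a| ≤ s i j * ε` splits into the two linear inequalities `± s i j * a ≤ s i j * ε`.
-/

open Matrix

namespace SubspaceClusteringLift

variable (Ns Np D : ℕ)

/-- Index type of the lifted vector `u = (1, r₁, …, r_{Ns}, s₁₁, …, s_{Ns Np})`: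
`none` is the leading `1`, `some (.inl (i, k))` is the `k`-th coordinate of the normal
`r i`, and `some (.inr (i, j))` is the assignment variable `s i j`. -/
abbrev Idx := Option ((Fin Ns × Fin D) ⊕ (Fin Ns × Fin Np))

/-- The lifted vector `u = (1, r, s)`. -/
def u (r : Fin Ns → Fin D → ℝ) (s : Fin Ns → Fin Np → ℝ) : Idx Ns Np D → ℝ
  | none => 1
  | some (.inl (i, k)) => r i k
  | some (.inr (i, j)) => s i j

/-- The lifted rank-one matrix `X = u uᵀ`. -/
def liftX (r : Fin Ns → Fin D → ℝ) (s : Fin Ns → Fin Np → ℝ) :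
    Matrix (Idx Ns Np D) (Idx Ns Np D) ℝ :=
  vecMulVec (u Ns Np D r s) (u Ns Np D r s)

/-- The subspace index carried by an index of `u`, if any. -/
def subOf : Idx Ns Np D → Option (Fin Ns)
  | none => none
  | some (.inl (i, _)) => some i
  | some (.inr (i, _)) => some i

/-- The point index carried by an index of `u`, if any. -/
def ptOf : Idx Ns Np D → Option (Fin Np)
  | some (.inr (_, j)) => some j
  | _ => none

/-- Whether an index of `u` is a coordinate of some subspace normal `r i`. -/
def isNormal : Idx Ns Np D → Prop
  | some (.inl _) => True
  | _ => False

/-- The allowed entries `(p, q)` of `X`: `p` and `q` index the same point `j`, or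
involve the leading `1`, or involve the same subspace's normal coordinates.  In
particular entries corresponding to products `s i₁ j₁ * s i₂ j₂` with `i₁ ≠ i₂` and
`j₁ ≠ j₂` are excluded. -/
def allowed (p q : Idx Ns Np D) : Prop :=
  p = none ∨ q = none ∨
    (ptOf Ns Np D p = ptOf Ns Np D q ∧ ptOf Ns Np D p ≠ none) ∨
    (subOf Ns Np D p = subOf Ns Np D q ∧
      (isNormal Ns Np D p ∨ isNormal Ns Np D q))

section Lift

variable {Ns Np D}

section Support

variable {n α : Type*} [Semiring α]

def supportedOn (R : n → n → Prop) : Submodule α (Matrix n n α) where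
  carrier := {A | ∀ p q, A p q ≠ 0 → R p q}
  zero_mem' := fun _ _ h => absurd rfl h
  add_mem' := by
    intro A B hA hB p q hAB
    by_cases h : A p q = 0
    · exact hB p q (by simpa [h] using hAB)
    · exact hA p q h
  smul_mem' := fun c A hA p q h => hA p q (right_ne_zero_of_mul h)

theorem single_mem_supportedOn [DecidableEq n] {R : n → n → Prop} {p q : n} (h : R p q)
    (c : α) : single p q c ∈ supportedOn R := by
  intro p' q' hc
  obtain ⟨rfl, rfl⟩ : p = p' ∧ q = q' := by
    by_contra hne
    exact hc (single_apply_of_ne _ _ _ _ _ hne)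
  exact h

end Support

theorem trace_transpose_single_mul_liftX (r : Fin Ns → Fin D → ℝ) (s : Fin Ns → Fin Np → ℝ)
    (p q : Idx Ns Np D) (c : ℝ) :
    ((single p q c)ᵀ * liftX Ns Np D r s).trace = c * (u Ns Np D r s p * u Ns Np D r s q) := by
  rw [transpose_single, trace_single_mul, smul_eq_mul]
  rfl

theorem allowed_none_left (q : Idx Ns Np D) : allowed Ns Np D none q :=
  Or.inl rfl

theorem allowed_assignment_self (i : Fin Ns) (j : Fin Np) :
    allowed Ns Np D (some (.inr (i, j))) (some (.inr (i, j))) := by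
  simp [allowed, ptOf]

theorem allowed_assignment_normal (i : Fin Ns) (j : Fin Np) (k : Fin D) :
    allowed Ns Np D (some (.inr (i, j))) (some (.inl (i, k))) := by
  simp [allowed, ptOf, subOf, isNormal]

theorem allowed_normal_self (i : Fin Ns) (k : Fin D) :
    allowed Ns Np D (some (.inl (i, k))) (some (.inl (i, k))) := by
  simp [allowed, ptOf, subOf, isNormal]

theorem exists_supported_lift_margin (x : Fin Np → Fin D → ℝ) (ε : ℝ) (i : Fin Ns)
    (j : Fin Np) : ∃ A₁ A₂ : Matrix (Idx Ns Np D) (Idx Ns Np D) ℝ,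
      A₁ ∈ supportedOn (allowed Ns Np D) ∧ A₂ ∈ supportedOn (allowed Ns Np D) ∧
      ∀ (r : Fin Ns → Fin D → ℝ) (s : Fin Ns → Fin Np → ℝ),
        (∀ i' j', s i' j' = (s i' j') ^ 2) →
        (((A₁ᵀ * liftX Ns Np D r s).trace ≤ 0 ∧ (A₂ᵀ * liftX Ns Np D r s).trace ≤ 0) ↔
          s i j * |∑ k, r i k * x j k| ≤ s i j * ε) := by
  let A : (Fin D → ℝ) → Matrix (Idx Ns Np D) (Idx Ns Np D) ℝ := fun y =>
    ∑ k, single (some (.inr (i, j))) (some (.inl (i, k))) (y k) -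
      single none (some (.inr (i, j))) ε
  have hA : ∀ y, A y ∈ supportedOn (allowed Ns Np D) := fun y =>
    sub_mem (sum_mem fun k _ => single_mem_supportedOn (allowed_assignment_normal i j k) _)
      (single_mem_supportedOn (allowed_none_left _) _)
  have htrace : ∀ r s y, ((A y)ᵀ * liftX Ns Np D r s).trace =
      s i j * ∑ k, r i k * y k - s i j * ε := by
    intro r s y
    simp only [A, transpose_sub, transpose_sum, Matrix.sub_mul, Finset.sum_mul, trace_sub,
      trace_sum, trace_transpose_single_mul_liftX, u, Finset.mul_sum, one_mul]
    congr 1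
    · exact Finset.sum_congr rfl fun k _ => by ring
    · ring
  refine ⟨A (x j), A (-x j), hA _, hA _, fun r s hbin => ?_⟩
  have hs : 0 ≤ s i j := hbin i j ▸ sq_nonneg _
  simp only [htrace, Pi.neg_apply, mul_neg, Finset.sum_neg_distrib, sub_nonpos]
  have hmul_abs : s i j * |∑ k, r i k * x j k| = |s i j * ∑ k, r i k * x j k| := by
    rw [abs_mul, abs_of_nonneg hs]
  rw [hmul_abs, abs_le']

theorem exists_supported_lift_binary (i : Fin Ns) (j : Fin Np) :
    ∃ A : Matrix (Idx Ns Np D) (Idx Ns Np D) ℝ, A ∈ supportedOn (allowed Ns Np D) ∧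
      ∀ (r : Fin Ns → Fin D → ℝ) (s : Fin Ns → Fin Np → ℝ),
        ((Aᵀ * liftX Ns Np D r s).trace = 0 ↔ s i j = (s i j) ^ 2) := by
  refine ⟨single none (some (.inr (i, j))) 1 - single (some (.inr (i, j))) (some (.inr (i, j))) 1,
    sub_mem (single_mem_supportedOn (allowed_none_left _) _)
      (single_mem_supportedOn (allowed_assignment_self i j) _), fun r s => ?_⟩
  simp only [transpose_sub, Matrix.sub_mul, trace_sub, trace_transpose_single_mul_liftX, u,
    one_mul, sub_eq_zero, sq]

theorem exists_supported_lift_sum_one (j : Fin Np) :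
    ∃ A : Matrix (Idx Ns Np D) (Idx Ns Np D) ℝ, A ∈ supportedOn (allowed Ns Np D) ∧
      ∀ (r : Fin Ns → Fin D → ℝ) (s : Fin Ns → Fin Np → ℝ),
        ((Aᵀ * liftX Ns Np D r s).trace = 1 ↔ ∑ i, s i j = 1) := by
  refine ⟨∑ i, single none (some (.inr (i, j))) 1,
    sum_mem fun i _ => single_mem_supportedOn (allowed_none_left _) _, fun r s => ?_⟩
  simp only [transpose_sum, Finset.sum_mul, trace_sum, trace_transpose_single_mul_liftX, u,
    one_mul]

theorem exists_supported_lift_unit_norm (i : Fin Ns) :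
    ∃ A : Matrix (Idx Ns Np D) (Idx Ns Np D) ℝ, A ∈ supportedOn (allowed Ns Np D) ∧
      ∀ (r : Fin Ns → Fin D → ℝ) (s : Fin Ns → Fin Np → ℝ),
        ((Aᵀ * liftX Ns Np D r s).trace = 1 ↔ ∑ k, r i k * r i k = 1) := by
  refine ⟨∑ k, single (some (.inl (i, k))) (some (.inl (i, k))) 1,
    sum_mem fun k _ => single_mem_supportedOn (allowed_normal_self i k) _, fun r s => ?_⟩
  simp only [transpose_sum, Finset.sum_mul, trace_sum, trace_transpose_single_mul_liftX, u,
    one_mul]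

end Lift

/-- Each constraint of the subspace clustering feasibility problem (4), lifted to linear
(in)equalities `⟨A, X⟩ = b` (resp. `≤ b`) on `X = u uᵀ`, only uses matrices `A`
supported on allowed entries: entries coupling `s i₁ j₁` with `s i₂ j₂` for `i₁ ≠ i₂`,
`j₁ ≠ j₂` are never needed. -/
theorem constraints_supported_on_allowed (x : Fin Np → Fin D → ℝ) (ε : ℝ) :
    -- (4a): `s i j * |r iᵀ x j| ≤ s i j * ε`, using the binary constraint (4b)
    (∀ (i : Fin Ns) (j : Fin Np), ∃ A₁ A₂ : Matrix (Idx Ns Np D) (Idx Ns Np D) ℝ,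
      (∀ p q, A₁ p q ≠ 0 → allowed Ns Np D p q) ∧
      (∀ p q, A₂ p q ≠ 0 → allowed Ns Np D p q) ∧
      ∀ (r : Fin Ns → Fin D → ℝ) (s : Fin Ns → Fin Np → ℝ),
        (∀ i' j', s i' j' = (s i' j') ^ 2) →
        (((A₁ᵀ * liftX Ns Np D r s).trace ≤ 0 ∧ (A₂ᵀ * liftX Ns Np D r s).trace ≤ 0) ↔
          s i j * |∑ k, r i k * x j k| ≤ s i j * ε)) ∧
    -- (4b): `s i j = s i j ^ 2`
    (∀ (i : Fin Ns) (j : Fin Np), ∃ A : Matrix (Idx Ns Np D) (Idx Ns Np D) ℝ,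
      (∀ p q, A p q ≠ 0 → allowed Ns Np D p q) ∧
      ∀ (r : Fin Ns → Fin D → ℝ) (s : Fin Ns → Fin Np → ℝ),
        ((Aᵀ * liftX Ns Np D r s).trace = 0 ↔ s i j = (s i j) ^ 2)) ∧
    -- (4c): `∑ i, s i j = 1`
    (∀ j : Fin Np, ∃ A : Matrix (Idx Ns Np D) (Idx Ns Np D) ℝ,
      (∀ p q, A p q ≠ 0 → allowed Ns Np D p q) ∧
      ∀ (r : Fin Ns → Fin D → ℝ) (s : Fin Ns → Fin Np → ℝ),
        ((Aᵀ * liftX Ns Np D r s).trace = 1 ↔ ∑ i, s i j = 1)) ∧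
    -- (4d): `r iᵀ r i = 1`
    (∀ i : Fin Ns, ∃ A : Matrix (Idx Ns Np D) (Idx Ns Np D) ℝ,
      (∀ p q, A p q ≠ 0 → allowed Ns Np D p q) ∧
      ∀ (r : Fin Ns → Fin D → ℝ) (s : Fin Ns → Fin Np → ℝ),
        ((Aᵀ * liftX Ns Np D r s).trace = 1 ↔ ∑ k, r i k * r i k = 1)) := by
  exact ⟨fun i j => exists_supported_lift_margin x ε i j,
    fun i j => exists_supported_lift_binary i j,
    fun j => exists_supported_lift_sum_one j,
    fun i => exists_supported_lift_unit_norm i⟩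

end SubspaceClusteringLift
end
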